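/- arXiv:1507.08477 — 2 statements merged into one kernel-verified Lean document; each statement's English description precedes it below -/
import Mathlib

section
/- Let V be a real vector space and A a finite index set partitioned into three pairwise disjoint subsets A_s, A_e, A_v (with A = A_s ∪ A_e ∪ A_v). Let (B_a)_{a ∈ A} be a family of vectors in V and (Λ̂_a)_{a ∈ A} a family of linear functionals V → ℝ satisfying the triangular duality conditions: (i) Λ̂_a(B_{a'}) = δ_{a a'} for all a ∈ A_s and all a' ∈ A; (ii) Λ̂_a(B_{a'}) = δ_{a a'} for all a ∈ A_e and all a' ∈ A_e ∪ A_v; (iii) Λ̂_a(B_{a'}) = δ_{a a'} for all a ∈ A_v and all a' ∈ A_v. Define corrected functionals: Λ_a = Λ̂_a for a ∈ A_s; Λ_a = Λ̂_a − Σ_{a'' ∈ A_s} Λ̂_a(B_{a''}) · Λ_{a''} for a ∈ A_e; and Λ_a = Λ̂_a − Σ_{a'' ∈ A_s ∪ A_e} Λ̂_a(B_{a''}) · Λ_{a''} for a ∈ A_v. Then the corrected family is fully dual to (B_a): Λ_a(B_{a'}) = δ_{a a'} for all a, a' ∈ A. -/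
/-- **Correction of triangularly dual functionals to a fully dual family**
(core linear-algebraic content of Theorem 5.1). Given a partition of the finite index set
`A` into structured indices `As`, edge indices `Ae` and vertex indices `Av`, a family of
vectors `B` and functionals `Λhat` satisfying the triangular duality conditions (i)–(iii),
the corrected functionals `Λ` defined by the stated formulas are fully dual to `B`. -/
theorem corrected_dual_functionals {V : Type*} [AddCommGroup V] [Module ℝ V]
    {A : Type*} [Fintype A] [DecidableEq A]
    (As Ae Av : Finset A)
    (hdisj_se : Disjoint As Ae) (hdisj_sv : Disjoint As Av) (hdisj_ev : Disjoint Ae Av)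
    (hcover : As ∪ Ae ∪ Av = Finset.univ)
    (B : A → V) (Λhat Λ : A → V →ₗ[ℝ] ℝ)
    (hs : ∀ a ∈ As, ∀ a' : A, Λhat a (B a') = if a = a' then (1 : ℝ) else 0)
    (he : ∀ a ∈ Ae, ∀ a' ∈ Ae ∪ Av, Λhat a (B a') = if a = a' then (1 : ℝ) else 0)
    (hv : ∀ a ∈ Av, ∀ a' ∈ Av, Λhat a (B a') = if a = a' then (1 : ℝ) else 0)
    (hΛs : ∀ a ∈ As, Λ a = Λhat a)
    (hΛe : ∀ a ∈ Ae, Λ a = Λhat a - ∑ a'' ∈ As, Λhat a (B a'') • Λ a'')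
    (hΛv : ∀ a ∈ Av, Λ a = Λhat a - ∑ a'' ∈ As ∪ Ae, Λhat a (B a'') • Λ a'') :
    ∀ a a' : A, Λ a (B a') = if a = a' then (1 : ℝ) else 0 := by
  have key_s : ∀ a ∈ As, ∀ a' : A, Λ a (B a') = if a = a' then (1 : ℝ) else 0 := by
    intro a ha a'
    rw [hΛs a ha]; exact hs a ha a'
  have key_e : ∀ a ∈ Ae, ∀ a' : A, Λ a (B a') = if a = a' then (1 : ℝ) else 0 := by
    intro a ha a'
    rw [hΛe a ha]
    simp only [LinearMap.sub_apply, LinearMap.coe_sum, Finset.sum_apply,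
      LinearMap.smul_apply, smul_eq_mul]
    by_cases h' : a' ∈ As
    · have hsum : ∑ a'' ∈ As, Λhat a (B a'') * Λ a'' (B a') = Λhat a (B a') := by
        rw [Finset.sum_eq_single a']
        · rw [key_s a' h', if_pos rfl, mul_one]
        · intro b hb hne; rw [key_s b hb, if_neg hne, mul_zero]
        · intro h; exact absurd h' h
      have hne : a ≠ a' := fun h => Finset.disjoint_left.mp hdisj_se h' (h ▸ ha)
      rw [hsum, sub_self, if_neg hne]
    · have hsum : ∑ a'' ∈ As, Λhat a (B a'') * Λ a'' (B a') = 0 := by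
        apply Finset.sum_eq_zero
        intro b hb
        rw [key_s b hb, if_neg, mul_zero]
        exact fun h => h' (h ▸ hb)
      rw [hsum, sub_zero]
      have ha' : a' ∈ Ae ∪ Av := by
        have hu := Finset.mem_univ a'
        rw [← hcover, Finset.mem_union, Finset.mem_union] at hu
        rw [Finset.mem_union]
        tauto
      exact he a ha a' ha'
  intro a a'
  have hu := Finset.mem_univ a
  rw [← hcover, Finset.mem_union, Finset.mem_union] at hu
  rcases hu with (ha | ha) | ha
  · exact key_s a ha a'
  · exact key_e a ha a'
  · rw [hΛv a ha]
    simp only [LinearMap.sub_apply, LinearMap.coe_sum, Finset.sum_apply,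
      LinearMap.smul_apply, smul_eq_mul]
    have key_se : ∀ b ∈ As ∪ Ae, Λ b (B a') = if b = a' then (1 : ℝ) else 0 := by
      intro b hb
      rcases Finset.mem_union.mp hb with h | h
      · exact key_s b h a'
      · exact key_e b h a'
    by_cases h' : a' ∈ As ∪ Ae
    · have hsum : ∑ a'' ∈ As ∪ Ae, Λhat a (B a'') * Λ a'' (B a') = Λhat a (B a') := by
        rw [Finset.sum_eq_single a']
        · rw [key_se a' h', if_pos rfl, mul_one]
        · intro b hb hne; rw [key_se b hb, if_neg hne, mul_zero]
        · intro h; exact absurd h' h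
      have hne : a ≠ a' := by
        intro h
        rcases Finset.mem_union.mp h' with h1 | h1
        · exact Finset.disjoint_left.mp hdisj_sv h1 (h ▸ ha)
        · exact Finset.disjoint_left.mp hdisj_ev h1 (h ▸ ha)
      rw [hsum, sub_self, if_neg hne]
    · have hsum : ∑ a'' ∈ As ∪ Ae, Λhat a (B a'') * Λ a'' (B a') = 0 := by
        apply Finset.sum_eq_zero
        intro b hb
        rw [key_se b hb, if_neg, mul_zero]
        exact fun h => h' (h ▸ hb)
      rw [hsum, sub_zero]
      have ha' : a' ∈ Av := by
        have hu := Finset.mem_univ a'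
        rw [← hcover, Finset.mem_union] at hu
        tauto
      exact hv a ha a' ha'
end

section
/- Let (X, μ) be a measure space, A a finite index set, and for each a ∈ A let E_a ⊆ X be a measurable set with 0 < μ(E_a) < ∞, let B_a ∈ L²(μ, ℝ) be a function vanishing μ-a.e. outside E_a and satisfying |B_a| ≤ 1 μ-a.e., and let Λ_a : L²(μ, ℝ) → ℝ be a linear functional satisfying |Λ_a(φ)| ≤ c · μ(E_a)^{-1/2} · ‖φ‖_{L²(E_a)} for all φ ∈ L²(μ, ℝ), for some constant c ≥ 0. Assume the supports have bounded overlap: there is an integer M ≥ 1 such that μ-almost every x ∈ X belongs to at most M of the sets E_a. Then the quasi-interpolant Π(φ) = Σ_{a ∈ A} Λ_a(φ) · B_a satisfies ‖Π(φ)‖_{L²(μ)} ≤ c · M · ‖φ‖_{L²(μ)} for all φ ∈ L²(μ, ℝ). -/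
/-!
With `λₐ = Λₐ(φ)`, expanding the square gives `‖∑ₐ λₐ Bₐ‖² = ∑ₐ,ᵦ λₐ λᵦ ⟪Bₐ, Bᵦ⟫`,
where `|⟪Bₐ, Bᵦ⟫| ≤ μ(Eₐ ∩ Eᵦ)`.
By `2|λₐ λᵦ| ≤ λₐ² + λᵦ²` and the symmetry of `μ(Eₐ ∩ Eᵦ)`, this is at most
`∑ₐ λₐ² ∑ᵦ μ(Eₐ ∩ Eᵦ) ≤ M ∑ₐ λₐ² μ(Eₐ)`, the bounded overlap bounding the row sums.
The local bound on `Λₐ` gives `λₐ² μ(Eₐ) ≤ c² ‖φ‖²_{L²(Eₐ)}`, and the bounded overlap once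
more gives `∑ₐ ‖φ‖²_{L²(Eₐ)} ≤ M ‖φ‖²`.
-/

open MeasureTheory Finset

theorem sq_mul_le_of_abs_le_mul_rpow_neg_half {l c t I : ℝ} (ht : 0 ≤ t) (hI : 0 ≤ I)
    (hl : |l| ≤ c * t ^ (-(1 / 2 : ℝ)) * √I) : l ^ 2 * t ≤ c ^ 2 * I := by
  rcases ht.eq_or_lt with rfl | ht
  · simpa using mul_nonneg (sq_nonneg c) hI
  have hsq : l ^ 2 ≤ c ^ 2 * t⁻¹ * I := by
    have := pow_le_pow_left₀ (abs_nonneg l) hl 2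
    rwa [sq_abs, mul_pow, mul_pow, Real.sq_sqrt hI, ← Real.rpow_mul_natCast ht.le,
      show (-(1 / 2 : ℝ)) * (2 : ℕ) = -1 by norm_num, Real.rpow_neg_one] at this
  calc l ^ 2 * t ≤ c ^ 2 * t⁻¹ * I * t := by gcongr
    _ = c ^ 2 * I := by field_simp

theorem sum_mul_mul_le_of_abs_le_of_symm {ι : Type*} [Fintype ι] (l : ι → ℝ) {G m : ι → ι → ℝ}
    (hG : ∀ i j, |G i j| ≤ m i j) (hm : ∀ i j, m i j = m j i) :
    ∑ i, ∑ j, l i * l j * G i j ≤ ∑ i, l i ^ 2 * ∑ j, m i j := by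
  have hswap : ∑ i, ∑ j, l j ^ 2 * m i j = ∑ i, ∑ j, l i ^ 2 * m i j := by
    rw [sum_comm]
    simp_rw [hm]
  calc ∑ i, ∑ j, l i * l j * G i j ≤ ∑ i, ∑ j, (l i ^ 2 + l j ^ 2) / 2 * m i j := by
        refine sum_le_sum fun i _ => sum_le_sum fun j _ => ?_
        have hm0 : 0 ≤ m i j := (abs_nonneg _).trans (hG i j)
        calc l i * l j * G i j ≤ |l i| * |l j| * |G i j| := by
              rw [← abs_mul, ← abs_mul]; exact le_abs_self _
          _ ≤ |l i| * |l j| * m i j := by gcongr; exact hG i j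
          _ ≤ (l i ^ 2 + l j ^ 2) / 2 * m i j := by
              gcongr
              nlinarith [sq_nonneg (|l i| - |l j|), sq_abs (l i), sq_abs (l j)]
    _ = (∑ i, ∑ j, l i ^ 2 * m i j + ∑ i, ∑ j, l j ^ 2 * m i j) / 2 := by
        simp only [← sum_add_distrib, sum_div]
        congr! 2; ring
    _ = ∑ i, l i ^ 2 * ∑ j, m i j := by
        simp_rw [hswap, mul_sum]; ring

theorem norm_sum_smul_sq {E : Type*} [NormedAddCommGroup E] [InnerProductSpace ℝ E]
    {ι : Type*} (s : Finset ι) (l : ι → ℝ) (v : ι → E) :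
    ‖∑ i ∈ s, l i • v i‖ ^ 2 = ∑ i ∈ s, ∑ j ∈ s, l i * l j * inner ℝ (v i) (v j) := by
  simp_rw [← real_inner_self_eq_norm_sq, sum_inner, inner_sum, real_inner_smul_left,
    real_inner_smul_right, mul_assoc]

section Overlap

variable {X : Type*} [MeasurableSpace X] {μ : Measure X}

theorem L2.norm_sq_eq_integral_sq (f : Lp ℝ 2 μ) : ‖f‖ ^ 2 = ∫ x, f x ^ 2 ∂μ := by
  rw [← real_inner_self_eq_norm_sq, L2.inner_def]
  simp [sq]

theorem sum_setIntegral_le_of_overlap {ι : Type*} [Fintype ι] {E : ι → Set X}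
    (hE : ∀ i, MeasurableSet (E i)) {M : ℕ} (hov : ∀ᵐ x ∂μ, Nat.card {i // x ∈ E i} ≤ M)
    {f : X → ℝ} (hf : Integrable f μ) (hf0 : 0 ≤ᵐ[μ] f) :
    ∑ i, ∫ x in E i, f x ∂μ ≤ M * ∫ x, f x ∂μ := by
  classical
  simp_rw [← integral_indicator (hE _)]
  rw [← integral_finsetSum _ fun i _ => hf.indicator (hE i), ← integral_const_mul]
  refine integral_mono_ae (integrable_finsetSum _ fun i _ => hf.indicator (hE i))
    (hf.const_mul _) ?_
  filter_upwards [hov, hf0] with x hx hfx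
  rw [Nat.card_eq_fintype_card, Fintype.card_subtype] at hx
  have : ∑ i, (E i).indicator f x = #{i | x ∈ E i} * f x := by
    simp [Set.indicator_apply, sum_ite]
  rw [this]
  gcongr

theorem sum_measureReal_inter_le_of_overlap {ι : Type*} [Fintype ι] {E : ι → Set X}
    (hE : ∀ i, MeasurableSet (E i)) {M : ℕ} (hov : ∀ᵐ x ∂μ, Nat.card {i // x ∈ E i} ≤ M)
    {s : Set X} (hs : MeasurableSet s) (hμs : μ s ≠ ⊤) :
    ∑ i, μ.real (s ∩ E i) ≤ M * μ.real s := by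
  have := sum_setIntegral_le_of_overlap hE hov
    ((integrable_indicator_iff hs).2 (integrableOn_const hμs (C := (1 : ℝ))))
    (ae_of_all _ (Set.indicator_nonneg fun _ _ => zero_le_one))
  simpa [setIntegral_indicator hs, Set.inter_comm, integral_indicator_const _ hs] using this

theorem L2.abs_inner_le_measureReal_inter {f g : Lp ℝ 2 μ} {s t : Set X}
    (hs : MeasurableSet s) (ht : MeasurableSet t) (hμs : μ s ≠ ⊤)
    (hfs : ∀ᵐ x ∂μ, x ∉ s → f x = 0) (hgt : ∀ᵐ x ∂μ, x ∉ t → g x = 0)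
    (hf : ∀ᵐ x ∂μ, |f x| ≤ 1) (hg : ∀ᵐ x ∂μ, |g x| ≤ 1) :
    |inner ℝ f g| ≤ μ.real (s ∩ t) := by
  have hpt : ∀ᵐ x ∂μ, ‖inner ℝ (f x) (g x)‖ ≤ (s ∩ t).indicator 1 x := by
    filter_upwards [hfs, hgt, hf, hg] with x hfs hgt hf hg
    by_cases hx : x ∈ s ∩ t
    · simpa [Set.indicator_of_mem hx, abs_mul] using mul_le_one₀ hg (abs_nonneg _) hf
    · rw [Set.indicator_of_notMem hx]
      rcases not_and_or.mp hx with hx | hx <;> simp [hfs, hgt, hx]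
  rw [L2.inner_def, ← Real.norm_eq_abs, ← integral_indicator_one (hs.inter ht)]
  refine norm_integral_le_of_norm_le ?_ hpt
  exact (integrable_indicator_iff (hs.inter ht)).2
    (integrableOn_const (measure_ne_top_of_subset Set.inter_subset_left hμs))

end Overlap

theorem quasi_interpolant_L2_stability_general {X : Type*} [MeasurableSpace X] (μ : Measure X)
    {A : Type*} [Fintype A]
    (E : A → Set X) (hEmeas : ∀ a, MeasurableSet (E a))
    (hEfin : ∀ a, μ (E a) < ⊤)
    (B : A → Lp ℝ 2 μ)
    (hBsupp : ∀ a, ∀ᵐ x ∂μ, x ∉ E a → (B a : X → ℝ) x = 0)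
    (hBbdd : ∀ a, ∀ᵐ x ∂μ, |(B a : X → ℝ) x| ≤ 1)
    (Λ : A → (Lp ℝ 2 μ →ₗ[ℝ] ℝ))
    (c : ℝ) (hc : 0 ≤ c)
    (hΛ : ∀ (a : A) (φ : Lp ℝ 2 μ),
      |Λ a φ| ≤ c * (μ (E a)).toReal ^ (-(1 / 2 : ℝ)) *
        Real.sqrt (∫ x in E a, ((φ : X → ℝ) x) ^ 2 ∂μ))
    (M : ℕ)
    (hoverlap : ∀ᵐ x ∂μ, Nat.card {a : A // x ∈ E a} ≤ M) :
    ∀ φ : Lp ℝ 2 μ, ‖∑ a : A, Λ a φ • B a‖ ≤ c * M * ‖φ‖ := by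
  intro φ
  set I : A → ℝ := fun a => ∫ x in E a, φ x ^ 2 ∂μ
  have hcoef (a : A) : Λ a φ ^ 2 * μ.real (E a) ≤ c ^ 2 * I a :=
    sq_mul_le_of_abs_le_mul_rpow_neg_half measureReal_nonneg
      (setIntegral_nonneg (hEmeas a) fun _ _ => sq_nonneg _) (hΛ a φ)
  have hrow (a : A) : ∑ b, μ.real (E a ∩ E b) ≤ M * μ.real (E a) :=
    sum_measureReal_inter_le_of_overlap hEmeas hoverlap (hEmeas a) (hEfin a).ne
  have hI : ∑ a, I a ≤ M * ‖φ‖ ^ 2 := by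
    rw [L2.norm_sq_eq_integral_sq]
    exact sum_setIntegral_le_of_overlap hEmeas hoverlap (Lp.memLp φ).integrable_sq
      (ae_of_all _ fun _ => sq_nonneg _)
  have hsq : ‖∑ a, Λ a φ • B a‖ ^ 2 ≤ (c * M * ‖φ‖) ^ 2 := calc
    _ = ∑ a, ∑ b, Λ a φ * Λ b φ * inner ℝ (B a) (B b) := norm_sum_smul_sq _ _ _
    _ ≤ ∑ a, Λ a φ ^ 2 * ∑ b, μ.real (E a ∩ E b) :=
        sum_mul_mul_le_of_abs_le_of_symm _ (fun a b => L2.abs_inner_le_measureReal_inter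
          (hEmeas a) (hEmeas b) (hEfin a).ne (hBsupp a) (hBsupp b) (hBbdd a) (hBbdd b))
          fun a b => by rw [Set.inter_comm]
    _ ≤ ∑ a, Λ a φ ^ 2 * (M * μ.real (E a)) := by gcongr with a; exact hrow a
    _ = M * ∑ a, Λ a φ ^ 2 * μ.real (E a) := by simp_rw [mul_sum, mul_left_comm]
    _ ≤ M * ∑ a, c ^ 2 * I a := by gcongr ?_ * ?_; exact sum_le_sum fun a _ => hcoef a
    _ ≤ M * (c ^ 2 * (M * ‖φ‖ ^ 2)) := by rw [← mul_sum]; gcongr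
    _ = (c * M * ‖φ‖) ^ 2 := by ring
  exact (pow_le_pow_iff_left₀ (norm_nonneg _) (by positivity) two_ne_zero).1 hsq

/-- **`L²`-stability of the quasi-interpolant.** If each basis function `B a ∈ L²(μ, ℝ)` is
supported in a set `E a` of finite positive measure, is bounded by `1`, each functional `Λ a`
satisfies the local stability bound `|Λ a φ| ≤ c · μ(E a)^{-1/2} · ‖φ‖_{L²(E a)}`, and the
supports `E a` have overlap at most `M`, then the quasi-interpolant
`Π(φ) = ∑ a, Λ a (φ) • B a` satisfies `‖Π(φ)‖ ≤ c · M · ‖φ‖`. -/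
theorem quasi_interpolant_L2_stability {X : Type*} [MeasurableSpace X] (μ : Measure X)
    {A : Type*} [Fintype A]
    (E : A → Set X) (hEmeas : ∀ a, MeasurableSet (E a))
    (hEpos : ∀ a, 0 < μ (E a)) (hEfin : ∀ a, μ (E a) < ⊤)
    (B : A → Lp ℝ 2 μ)
    (hBsupp : ∀ a, ∀ᵐ x ∂μ, x ∉ E a → (B a : X → ℝ) x = 0)
    (hBbdd : ∀ a, ∀ᵐ x ∂μ, |(B a : X → ℝ) x| ≤ 1)
    (Λ : A → (Lp ℝ 2 μ →ₗ[ℝ] ℝ))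
    (c : ℝ) (hc : 0 ≤ c)
    (hΛ : ∀ (a : A) (φ : Lp ℝ 2 μ),
      |Λ a φ| ≤ c * (μ (E a)).toReal ^ (-(1 / 2 : ℝ)) *
        Real.sqrt (∫ x in E a, ((φ : X → ℝ) x) ^ 2 ∂μ))
    (M : ℕ) (hM : 1 ≤ M)
    (hoverlap : ∀ᵐ x ∂μ, Nat.card {a : A // x ∈ E a} ≤ M) :
    ∀ φ : Lp ℝ 2 μ, ‖∑ a : A, Λ a φ • B a‖ ≤ c * M * ‖φ‖ :=
  quasi_interpolant_L2_stability_general μ E hEmeas hEfin B hBsupp hBbdd Λ c hc hΛ M hoverlap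
end
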